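/- arXiv:2208.07676 — 2 statements merged into one kernel-verified Lean document; each statement's English description precedes it below -/
import Mathlib

section
/- Let L be a finite-dimensional Camina Lie algebra over a finite field 𝔽_q of dimension 3n and nilpotency class 2 with dim(L/L') = 2n, and suppose L has at least two distinct abelian Lie subalgebras of dimension 2n over 𝔽_q. Then there exists a semifield F over 𝔽_q with dim_{𝔽_q} F = n such that L is isomorphic to the semifield Lie algebra L(F) as an 𝔽_q-Lie algebra. -/
open Module

section BasicDefs

/-- The centralizer of `x` in a Lie algebra, as a submodule. -/
def lieCentralizer (K : Type*) [CommRing K] {L : Type*} [LieRing L] [LieAlgebra K L]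
    (x : L) : Submodule K L where
  carrier := {y : L | ⁅x, y⁆ = 0}
  add_mem' := by
    intro a b ha hb
    simp only [Set.mem_setOf_eq, lie_add] at *
    rw [ha, hb, add_zero]
  zero_mem' := by simp
  smul_mem' := by
    intro c a ha
    simp only [Set.mem_setOf_eq, lie_smul] at *
    rw [ha, smul_zero]

/-- The center of a Lie algebra, as a submodule. -/
def lieCenterSub (K : Type*) [CommRing K] (L : Type*) [LieRing L] [LieAlgebra K L] :
    Submodule K L where
  carrier := {z : L | ∀ y : L, ⁅z, y⁆ = 0}
  add_mem' := by
    intro a b ha hb y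
    rw [add_lie, ha y, hb y, add_zero]
  zero_mem' := fun y => zero_lie y
  smul_mem' := by
    intro c a ha y
    rw [smul_lie, ha y, smul_zero]

/-- `gammaSub K L k` is the `(k+1)`-st term `γ_{k+1}(L)` of the lower central series, so that
`gammaSub K L 0 = γ₁(L) = L` and `γ_{i+1}(L) = [L, γ_i(L)]`. -/
def gammaSub (K : Type*) [CommRing K] (L : Type*) [LieRing L] [LieAlgebra K L] :
    ℕ → Submodule K L
  | 0 => ⊤
  | k + 1 => Submodule.span K {z : L | ∃ x : L, ∃ y ∈ gammaSub K L k, ⁅x, y⁆ = z}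

/-- The derived subalgebra `L' = [L, L]` as a submodule. -/
def derivedSub (K : Type*) [CommRing K] (L : Type*) [LieRing L] [LieAlgebra K L] :
    Submodule K L :=
  gammaSub K L 1

/-- `L` is 3-step nilpotent: `γ₄(L) = 0` and `γ₃(L) ≠ 0`. -/
def IsThreeStepNilpotentAlg (K : Type*) [CommRing K] (L : Type*) [LieRing L]
    [LieAlgebra K L] : Prop :=
  gammaSub K L 3 = ⊥ ∧ gammaSub K L 2 ≠ ⊥

/-- `L` is a stem Lie algebra: `Z(L) ⊆ L'`. -/
def IsStemAlg (K : Type*) [CommRing K] (L : Type*) [LieRing L] [LieAlgebra K L] : Prop :=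
  lieCenterSub K L ≤ derivedSub K L

/-- The breadth of an element: `dim L - dim C_L(x)`. -/
noncomputable def lieBreadth (K : Type*) [CommRing K] {L : Type*} [LieRing L]
    [LieAlgebra K L] (x : L) : ℕ :=
  finrank K L - finrank K (lieCentralizer K x)

/-- `L` has breadth type `(0, n)`: `L` is non-abelian and every non-central element has
breadth exactly `n`. -/
def HasBreadthTypeZeroN (K : Type*) [CommRing K] (L : Type*) [LieRing L] [LieAlgebra K L]
    (n : ℕ) : Prop :=
  (∃ a b : L, ⁅a, b⁆ ≠ 0) ∧ ∀ x : L, x ∉ lieCenterSub K L → lieBreadth K x = n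

/-- The image `[x, L]` of `ad x`, as a submodule. -/
def adImage (K : Type*) [CommRing K] {L : Type*} [LieRing L] [LieAlgebra K L] (x : L) :
    Submodule K L where
  carrier := {z : L | ∃ y : L, ⁅x, y⁆ = z}
  add_mem' := by
    rintro a b ⟨ya, rfl⟩ ⟨yb, rfl⟩
    exact ⟨ya + yb, lie_add x ya yb⟩
  zero_mem' := ⟨0, lie_zero x⟩
  smul_mem' := by
    rintro c a ⟨y, rfl⟩
    exact ⟨c • y, lie_smul c x y⟩

/-- `L` is a Camina Lie algebra: `[x, L] = L'` for every `x ∉ L'`. -/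
def IsCaminaAlg (K : Type*) [CommRing K] (L : Type*) [LieRing L] [LieAlgebra K L] : Prop :=
  ∀ x : L, x ∉ derivedSub K L → adImage K x = derivedSub K L

end BasicDefs

section G5

/-- The underlying type of the Lie algebra `𝔤_m`: quintuples over `R`. -/
abbrev G5 (R : Type*) := R × R × R × R × R

namespace G5

variable {R : Type*} [CommRing R]

/-- The bracket `[(a,b,c,d,e),(x,y,z,u,v)] = (0,0, ay-bx, ay-bx+2cx-2az, ay-bx+2bz-2cy)`. -/
def br (P Q : G5 R) : G5 R :=
  (0, 0,
    P.1 * Q.2.1 - P.2.1 * Q.1,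
    P.1 * Q.2.1 - P.2.1 * Q.1 + 2 * P.2.2.1 * Q.1 - 2 * P.1 * Q.2.2.1,
    P.1 * Q.2.1 - P.2.1 * Q.1 + 2 * P.2.1 * Q.2.2.1 - 2 * P.2.2.1 * Q.2.1)

private lemma add_br (P Q N : G5 R) : br (P + Q) N = br P N + br Q N := by
  obtain ⟨a, b, c, d, e⟩ := P
  obtain ⟨a', b', c', d', e'⟩ := Q
  obtain ⟨x, y, z, u, v⟩ := N
  simp only [br, Prod.mk_add_mk, Prod.mk.injEq]
  and_intros <;> ring

private lemma br_add (P Q N : G5 R) : br P (Q + N) = br P Q + br P N := by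
  obtain ⟨a, b, c, d, e⟩ := P
  obtain ⟨a', b', c', d', e'⟩ := Q
  obtain ⟨x, y, z, u, v⟩ := N
  simp only [br, Prod.mk_add_mk, Prod.mk.injEq]
  and_intros <;> ring

private lemma br_self (P : G5 R) : br P P = 0 := by
  obtain ⟨a, b, c, d, e⟩ := P
  simp only [br, Prod.mk_eq_zero]
  and_intros <;> first | trivial | ring

private lemma br_leibniz (P Q N : G5 R) : br P (br Q N) = br (br P Q) N + br Q (br P N) := by
  obtain ⟨a, b, c, d, e⟩ := P
  obtain ⟨a', b', c', d', e'⟩ := Q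
  obtain ⟨x, y, z, u, v⟩ := N
  simp only [br, Prod.mk_add_mk, Prod.mk.injEq]
  and_intros <;> ring

instance (priority := 2000) instLieRing : LieRing (G5 R) :=
  { (inferInstance : AddCommGroup (G5 R)) with
    bracket := br
    add_lie := add_br
    lie_add := br_add
    lie_self := br_self
    leibniz_lie := br_leibniz }

@[simp] lemma bracket_def (P Q : G5 R) : ⁅P, Q⁆ = br P Q := rfl

variable {K : Type*} [CommRing K] [Algebra K R]

private lemma br_smul (t : K) (P Q : G5 R) : br P (t • Q) = t • br P Q := by
  obtain ⟨a, b, c, d, e⟩ := P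
  obtain ⟨x, y, z, u, v⟩ := Q
  simp only [br, Prod.smul_mk, Prod.mk.injEq]
  and_intros <;> simp only [Algebra.smul_def] <;> ring

instance (priority := 2000) instLieAlgebra : LieAlgebra K (G5 R) :=
  { (inferInstance : Module K (G5 R)) with
    lie_smul := br_smul }

end G5

end G5

section U3

attribute [local instance] LieRing.ofAssociativeRing LieAlgebra.ofAssociativeAlgebra

private lemma mul_strictUpper {K' : Type*} [CommRing K'] {M N : Matrix (Fin 3) (Fin 3) K'}
    (hM : ∀ i j : Fin 3, j ≤ i → M i j = 0) (hN : ∀ i j : Fin 3, j ≤ i → N i j = 0) :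
    ∀ i j : Fin 3, j ≤ i → (M * N) i j = 0 := by
  intro i j hij
  rw [Matrix.mul_apply]
  apply Finset.sum_eq_zero
  intro k _
  rcases le_or_gt k i with h | h
  · rw [hM i k h, zero_mul]
  · rw [hN k j (hij.trans h.le), mul_zero]

/-- The Lie algebra (over `K`) of 3×3 strictly upper triangular matrices with entries
in `K'`, with bracket `[A, B] = AB - BA`. -/
def U3 (K K' : Type*) [CommRing K] [CommRing K'] [Algebra K K'] :
    LieSubalgebra K (Matrix (Fin 3) (Fin 3) K') where
  carrier := {M : Matrix (Fin 3) (Fin 3) K' | ∀ i j : Fin 3, j ≤ i → M i j = 0}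
  add_mem' := by
    intro a b ha hb i j hij
    simp only [Matrix.add_apply, ha i j hij, hb i j hij, add_zero]
  zero_mem' := fun i j _ => rfl
  smul_mem' := by
    intro c M hM i j hij
    simp only [Matrix.smul_apply, hM i j hij, smul_zero]
  lie_mem' := by
    intro M N hM hN i j hij
    have h1 : (M * N) i j = 0 := mul_strictUpper hM hN i j hij
    have h2 : (N * M) i j = 0 := mul_strictUpper hN hM i j hij
    simp only [Ring.lie_def, Matrix.sub_apply, h1, h2, sub_zero]

end U3

section Semifield

/-- A (finite-dimensional) semifield structure over `K` on the `K`-vector space `F`: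
a `K`-bilinear multiplication with a two-sided identity and no zero divisors
(multiplication need not be associative). -/
structure SemifieldStruct (K F : Type*) [Field K] [AddCommGroup F] [Module K F] where
  mul : F →ₗ[K] F →ₗ[K] F
  one : F
  one_ne_zero : one ≠ 0
  one_mul : ∀ a : F, mul one a = a
  mul_one : ∀ a : F, mul a one = a
  eq_zero_or_eq_zero_of_mul_eq_zero : ∀ a b : F, mul a b = 0 → a = 0 ∨ b = 0

variable {K F : Type*} [Field K] [AddCommGroup F] [Module K F]

/-- The bracket of the semifield Lie algebra `L(F)`:
`[(a₁,b₁,c₁),(a₂,b₂,c₂)] = (0, 0, a₁·b₂ − a₂·b₁)`. -/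
def lfbr (S : SemifieldStruct K F) (P Q : F × F × F) : F × F × F :=
  (0, 0, S.mul P.1 Q.2.1 - S.mul Q.1 P.2.1)

private lemma lfbr_add_left (S : SemifieldStruct K F) (P Q N : F × F × F) :
    lfbr S (P + Q) N = lfbr S P N + lfbr S Q N := by
  simp only [lfbr, Prod.fst_add, Prod.snd_add, map_add, LinearMap.add_apply,
    Prod.mk_add_mk, Prod.mk.injEq, add_zero]
  and_intros <;> first | trivial | abel

private lemma lfbr_add_right (S : SemifieldStruct K F) (P Q N : F × F × F) :
    lfbr S P (Q + N) = lfbr S P Q + lfbr S P N := by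
  simp only [lfbr, Prod.fst_add, Prod.snd_add, map_add, LinearMap.add_apply,
    Prod.mk_add_mk, Prod.mk.injEq, add_zero]
  and_intros <;> first | trivial | abel

private lemma lfbr_self (S : SemifieldStruct K F) (P : F × F × F) : lfbr S P P = 0 := by
  simp only [lfbr, sub_self, Prod.mk_eq_zero]
  and_intros <;> trivial

private lemma lfbr_leibniz (S : SemifieldStruct K F) (P Q N : F × F × F) :
    lfbr S P (lfbr S Q N) = lfbr S (lfbr S P Q) N + lfbr S Q (lfbr S P N) := by
  simp only [lfbr, map_zero, LinearMap.zero_apply, sub_zero, zero_sub, map_sub,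
    LinearMap.sub_apply, Prod.mk_add_mk, Prod.mk.injEq, add_zero]

/-- The Lie ring structure of the semifield Lie algebra `L(F)` on `F × F × F`. -/
def lfLieRing (S : SemifieldStruct K F) : LieRing (F × F × F) :=
  { (inferInstance : AddCommGroup (F × F × F)) with
    bracket := lfbr S
    add_lie := lfbr_add_left S
    lie_add := lfbr_add_right S
    lie_self := lfbr_self S
    leibniz_lie := lfbr_leibniz S }

private lemma lfbr_smul (S : SemifieldStruct K F) (t : K) (P Q : F × F × F) :
    lfbr S P (t • Q) = t • lfbr S P Q := by
  simp only [lfbr, Prod.smul_fst, Prod.smul_snd, map_smul, LinearMap.smul_apply,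
    Prod.smul_mk, Prod.mk.injEq, smul_zero, smul_sub]

/-- The Lie algebra structure of the semifield Lie algebra `L(F)` on `F × F × F`. -/
def lfLieAlgebra (S : SemifieldStruct K F) :
    letI := lfLieRing S
    LieAlgebra K (F × F × F) :=
  letI := lfLieRing S
  { (inferInstance : Module K (F × F × F)) with
    lie_smul := lfbr_smul S }

end Semifield

section AuxLemmas

variable {K : Type*} [Field K] {L : Type*} [LieRing L] [LieAlgebra K L]

lemma lie_mem_derivedSub (x y : L) : ⁅x, y⁆ ∈ derivedSub K L :=
  Submodule.subset_span ⟨x, y, Submodule.mem_top, rfl⟩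

lemma central_of_gamma2 (h : gammaSub K L 2 = ⊥) (x : L) {c : L}
    (hc : c ∈ derivedSub K L) : ⁅x, c⁆ = 0 := by
  have hm : ⁅x, c⁆ ∈ gammaSub K L 2 := Submodule.subset_span ⟨x, c, hc, rfl⟩
  rw [h] at hm
  simpa using hm

lemma central_of_gamma2' (h : gammaSub K L 2 = ⊥) {c : L}
    (hc : c ∈ derivedSub K L) (x : L) : ⁅c, x⁆ = 0 := by
  rw [← lie_skew, central_of_gamma2 h x hc, neg_zero]

lemma range_ad_eq (x : L) :
    LinearMap.range (LieAlgebra.ad K L x) = adImage K x := by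
  ext z
  simp only [LinearMap.mem_range, LieAlgebra.ad_apply]
  exact Iff.rfl

lemma ker_ad_eq (x : L) :
    LinearMap.ker (LieAlgebra.ad K L x) = lieCentralizer K x := by
  ext z
  simp only [LinearMap.mem_ker, LieAlgebra.ad_apply]
  exact Iff.rfl

lemma mem_lieCentralizer_iff (x y : L) : y ∈ lieCentralizer K x ↔ ⁅x, y⁆ = 0 := Iff.rfl

end AuxLemmas

/-- A Camina Lie algebra over a finite field `𝔽_q` of dimension `3n`,
nilpotency class 2, `dim (L/L') = 2n`, possessing two distinct abelian subalgebras of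
dimension `2n`, is isomorphic to the semifield Lie algebra `L(F)` of a semifield `F` over
`𝔽_q` with `dim_{𝔽_q} F = n`. -/
theorem stmt13 (q n : ℕ)
    (K : Type*) [Field K] [Fintype K] (hK : Fintype.card K = q)
    (L : Type*) [LieRing L] [LieAlgebra K L] [Module.Finite K L]
    (hcamina : IsCaminaAlg K L)
    (hdim : finrank K L = 3 * n)
    (hclass2 : gammaSub K L 2 = ⊥ ∧ gammaSub K L 1 ≠ ⊥)
    (hquot : finrank K (L ⧸ derivedSub K L) = 2 * n)
    (habelian : ∃ A B : LieSubalgebra K L, A ≠ B ∧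
      finrank K A = 2 * n ∧ finrank K B = 2 * n ∧
      (∀ x ∈ A, ∀ y ∈ A, ⁅x, y⁆ = 0) ∧ (∀ x ∈ B, ∀ y ∈ B, ⁅x, y⁆ = 0)) :
    ∃ (F : Type) (iG : AddCommGroup F),
      letI := iG
      ∃ (iM : Module K F),
        letI := iM
        ∃ S : SemifieldStruct K F,
          finrank K F = n ∧
          (letI := lfLieRing S
           letI := lfLieAlgebra (K := K) S
           Nonempty (L ≃ₗ⁅K⁆ (F × F × F))) := by
  classical
  obtain ⟨A, B, hAB, hdA, hdB, hAab, hBab⟩ := habelian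
  haveI : FiniteDimensional K L := ‹Module.Finite K L›
  set p : Submodule K L := derivedSub K L with hpdef
  -- basic facts
  have hbr : ∀ x y : L, ⁅x, y⁆ ∈ p := fun x y => lie_mem_derivedSub x y
  have hcen : ∀ (x : L), ∀ c ∈ p, ⁅x, c⁆ = 0 := fun x c hc => central_of_gamma2 hclass2.1 x hc
  have hcen' : ∀ c ∈ p, ∀ x : L, ⁅c, x⁆ = 0 := fun c hc x => central_of_gamma2' hclass2.1 hc x
  have hdp : finrank K p = n := by
    have h := Submodule.finrank_quotient_add_finrank p
    rw [hquot, hdim] at h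
    omega
  have hn : 0 < n := by
    rcases Nat.eq_zero_or_pos n with h0 | h; swap
    · exact h
    exfalso
    apply hclass2.2
    have : p = ⊥ := Submodule.finrank_eq_zero.mp (by rw [hdp, h0])
    exact this
  -- centralizer dimension
  have hcent2n : ∀ x : L, x ∉ p → finrank K (lieCentralizer K x) = 2 * n := by
    intro x hx
    have h := LinearMap.finrank_range_add_finrank_ker (LieAlgebra.ad K L x)
    rw [range_ad_eq, ker_ad_eq, hcamina x hx, hdim] at h
    have : finrank K (derivedSub K L) = n := hdp
    rw [this] at h
    omega
  -- abelian subalgebra is a centralizer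
  have key : ∀ (C : LieSubalgebra K L), finrank K C = 2 * n →
      (∀ a ∈ C, ∀ b ∈ C, ⁅a, b⁆ = 0) → ∀ x ∈ C, x ∉ p →
      (C : Submodule K L) = lieCentralizer K x := by
    intro C hdC habC x hxC hxp
    have hle : (C : Submodule K L) ≤ lieCentralizer K x := by
      intro y hy
      exact habC x hxC y hy
    refine Submodule.eq_of_le_of_finrank_le hle ?_
    rw [hcent2n x hxp]
    exact le_of_eq hdC.symm
  -- nontrivial elements outside p
  have hfr : ∀ C : LieSubalgebra K L, finrank K (C : Submodule K L) = finrank K C :=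
    fun _ => rfl
  have hnotle : ∀ (C : LieSubalgebra K L), finrank K C = 2 * n → ∃ x ∈ C, x ∉ p := by
    intro C hdC
    by_contra h
    push_neg at h
    have hle : (C : Submodule K L) ≤ p := fun x hx => h x hx
    have h2 := Submodule.finrank_mono hle
    rw [hfr, hdC, hdp] at h2
    omega
  obtain ⟨xA, hxA, hxAp⟩ := hnotle A hdA
  obtain ⟨xB, hxB, hxBp⟩ := hnotle B hdB
  have hApB : p ≤ (A : Submodule K L) := by
    rw [key A hdA hAab xA hxA hxAp]
    intro c hc
    exact hcen xA c hc
  have hBpB : p ≤ (B : Submodule K L) := by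
    rw [key B hdB hBab xB hxB hxBp]
    intro c hc
    exact hcen xB c hc
  have hABp : (A : Submodule K L) ⊓ (B : Submodule K L) = p := by
    refine le_antisymm ?_ (le_inf hApB hBpB)
    intro x hx
    by_contra hxp
    apply hAB
    rw [← LieSubalgebra.toSubmodule_inj]
    rw [key A hdA hAab x hx.1 hxp, key B hdB hBab x hx.2 hxp]
  have hsup : (A : Submodule K L) ⊔ (B : Submodule K L) = ⊤ := by
    apply Submodule.eq_top_of_finrank_eq
    have h := Submodule.finrank_sup_add_finrank_inf_eq (A : Submodule K L) (B : Submodule K L)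
    rw [hABp, hdp, hfr, hfr, hdA, hdB] at h
    rw [hdim]
    omega
  -- complements
  have hcompl : ∀ (C : Submodule K L), p ≤ C → ∃ X : Submodule K L,
      X ≤ C ∧ X ⊓ p = ⊥ ∧ X ⊔ p = C := by
    intro C hpC
    obtain ⟨U, hU⟩ := Submodule.exists_isCompl (Submodule.comap C.subtype p)
    refine ⟨U.map C.subtype, Submodule.map_subtype_le C U, ?_, ?_⟩
    · have h1 : U.map C.subtype ⊓ (Submodule.comap C.subtype p).map C.subtype = ⊥ := by
        rw [← Submodule.map_inf _ (Submodule.injective_subtype C), hU.symm.inf_eq_bot,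
          Submodule.map_bot]
      rwa [Submodule.map_comap_subtype, inf_eq_right.mpr hpC] at h1
    · have h1 : U.map C.subtype ⊔ (Submodule.comap C.subtype p).map C.subtype = C := by
        rw [← Submodule.map_sup, hU.symm.sup_eq_top, Submodule.map_top, Submodule.range_subtype]
      rwa [Submodule.map_comap_subtype, inf_eq_right.mpr hpC] at h1
  obtain ⟨X, hXA, hXp, hXsup⟩ := hcompl (A : Submodule K L) hApB
  obtain ⟨Y, hYB, hYp, hYsup⟩ := hcompl (B : Submodule K L) hBpB
  have hdX : finrank K X = n := by
    have h := Submodule.finrank_sup_add_finrank_inf_eq X p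
    rw [hXsup, hXp, hdp, finrank_bot, hfr, hdA] at h
    omega
  have hdY : finrank K Y = n := by
    have h := Submodule.finrank_sup_add_finrank_inf_eq Y p
    rw [hYsup, hYp, hdp, finrank_bot, hfr, hdB] at h
    omega
  -- X ∩ B = ⊥, Y ∩ A = ⊥
  have hXB : X ⊓ (B : Submodule K L) = ⊥ := by
    have h1 : X ⊓ (B : Submodule K L) ≤ X ⊓ p :=
      le_inf inf_le_left (le_trans (le_inf (le_trans inf_le_left hXA) inf_le_right) hABp.le)
    rw [hXp] at h1
    exact le_bot_iff.mp h1
  have hYA : Y ⊓ (A : Submodule K L) = ⊥ := by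
    have h1 : Y ⊓ (A : Submodule K L) ≤ Y ⊓ p :=
      le_inf inf_le_left (le_trans (le_inf inf_le_right (le_trans inf_le_left hYB)) hABp.le)
    rw [hYp] at h1
    exact le_bot_iff.mp h1
  -- nonzero elements of X and Y
  have hXnz : ∀ x ∈ X, x ≠ 0 → x ∉ p := by
    intro x hx hx0 hxp
    have : x ∈ X ⊓ p := ⟨hx, hxp⟩
    rw [hXp] at this
    exact hx0 this
  have hYnz : ∀ y ∈ Y, y ≠ 0 → y ∉ p := by
    intro y hy hy0 hyp
    have : y ∈ Y ⊓ p := ⟨hy, hyp⟩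
    rw [hYp] at this
    exact hy0 this
  have hXbot : X ≠ ⊥ := by
    intro h
    rw [h, finrank_bot] at hdX
    omega
  have hYbot : Y ≠ ⊥ := by
    intro h
    rw [h, finrank_bot] at hdY
    omega
  obtain ⟨e, heX, he0⟩ := (Submodule.ne_bot_iff X).mp hXbot
  obtain ⟨f, hfY, hf0⟩ := (Submodule.ne_bot_iff Y).mp hYbot
  have hep : e ∉ p := hXnz e heX he0
  have hfp : f ∉ p := hYnz f hfY hf0
  have hAcen : (A : Submodule K L) = lieCentralizer K e :=
    key A hdA hAab e (hXA heX) (hXnz e heX he0)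
  have hBcen : (B : Submodule K L) = lieCentralizer K f :=
    key B hdB hBab f (hYB hfY) (hYnz f hfY hf0)
  -- the bilinear pairing X × Y → p
  let B0 : ↥X →ₗ[K] ↥Y →ₗ[K] ↥p :=
    { toFun := fun x =>
        { toFun := fun y => ⟨⁅(x : L), (y : L)⁆, hbr _ _⟩
          map_add' := by
            intro y z
            apply Subtype.ext
            simp [lie_add]
          map_smul' := by
            intro c y
            apply Subtype.ext
            simp [lie_smul] }
      map_add' := by
        intro x x'
        apply LinearMap.ext
        intro y
        apply Subtype.ext
        simp [add_lie]
      map_smul' := by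
        intro c x
        apply LinearMap.ext
        intro y
        apply Subtype.ext
        simp [smul_lie] }
  have hB0 : ∀ (x : ↥X) (y : ↥Y), ((B0 x y : ↥p) : L) = ⁅(x : L), (y : L)⁆ := fun x y => rfl
  -- injectivity of the partial maps
  let φ : ↥X →ₗ[K] ↥p := B0.flip ⟨f, hfY⟩
  let ψ : ↥Y →ₗ[K] ↥p := B0 ⟨e, heX⟩
  have hφinj : Function.Injective φ := by
    rw [← LinearMap.ker_eq_bot]
    rw [Submodule.eq_bot_iff]
    rintro x hx
    have h0 : ⁅(x : L), f⁆ = 0 := congrArg Subtype.val hx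
    have hxB : (x : L) ∈ (B : Submodule K L) := by
      rw [hBcen, mem_lieCentralizer_iff, ← lie_skew, h0, neg_zero]
    have : (x : L) ∈ X ⊓ (B : Submodule K L) := ⟨x.2, hxB⟩
    rw [hXB] at this
    exact Subtype.ext this
  have hψinj : Function.Injective ψ := by
    rw [← LinearMap.ker_eq_bot]
    rw [Submodule.eq_bot_iff]
    rintro y hy
    have h0 : ⁅e, (y : L)⁆ = 0 := congrArg Subtype.val hy
    have hyA : (y : L) ∈ (A : Submodule K L) := by
      rw [hAcen, mem_lieCentralizer_iff]
      exact h0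
    have : (y : L) ∈ Y ⊓ (A : Submodule K L) := ⟨y.2, hyA⟩
    rw [hYA] at this
    exact Subtype.ext this
  let φe : ↥X ≃ₗ[K] ↥p := LinearMap.linearEquivOfInjective φ hφinj (by rw [hdX, hdp])
  let ψe : ↥Y ≃ₗ[K] ↥p := LinearMap.linearEquivOfInjective ψ hψinj (by rw [hdY, hdp])
  have hφe : ∀ x : ↥X, φe x = φ x := fun _ => rfl
  have hψe : ∀ y : ↥Y, ψe y = ψ y := fun _ => rfl
  -- the semifield structure on ↥p
  let S : SemifieldStruct K ↥p :=
    { mul := (B0.comp φe.symm.toLinearMap).compl₂ ψe.symm.toLinearMap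
      one := ⟨⁅e, f⁆, hbr _ _⟩
      one_ne_zero := by
        intro h
        have h1 : ψ ⟨f, hfY⟩ = 0 := Subtype.ext (congrArg Subtype.val h)
        have h2 : (⟨f, hfY⟩ : ↥Y) = 0 := hψinj (by rw [h1, map_zero])
        exact hf0 (congrArg Subtype.val h2)
      one_mul := by
        intro b
        show B0 (φe.symm ⟨⁅e, f⁆, hbr _ _⟩) (ψe.symm b) = b
        have h1 : φe.symm ⟨⁅e, f⁆, hbr _ _⟩ = ⟨e, heX⟩ := by
          rw [LinearEquiv.symm_apply_eq, hφe]
          rfl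
        rw [h1]
        have h2 : B0 ⟨e, heX⟩ (ψe.symm b) = ψe (ψe.symm b) := (hψe _).symm
        rw [h2, LinearEquiv.apply_symm_apply]
      mul_one := by
        intro a
        show B0 (φe.symm a) (ψe.symm ⟨⁅e, f⁆, hbr _ _⟩) = a
        have h1 : ψe.symm ⟨⁅e, f⁆, hbr _ _⟩ = ⟨f, hfY⟩ := by
          rw [LinearEquiv.symm_apply_eq, hψe]
          rfl
        rw [h1]
        have h2 : B0 (φe.symm a) ⟨f, hfY⟩ = φe (φe.symm a) := (hφe _).symm
        rw [h2, LinearEquiv.apply_symm_apply]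
      eq_zero_or_eq_zero_of_mul_eq_zero := by
        intro a b h
        have h0 : B0 (φe.symm a) (ψe.symm b) = 0 := h
        rcases eq_or_ne a 0 with ha | ha
        · exact Or.inl ha
        · right
          set x : ↥X := φe.symm a with hxdef
          set y : ↥Y := ψe.symm b with hydef
          have hx0 : x ≠ 0 := by
            intro h'
            apply ha
            rw [hxdef] at h'
            have := congrArg φe h'
            rwa [LinearEquiv.apply_symm_apply, map_zero] at this
          have hxp : (x : L) ∉ p := hXnz _ x.2 (fun h' => hx0 (Subtype.ext h'))
          have hbrxy : ⁅(x : L), (y : L)⁆ = 0 := congrArg Subtype.val h0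
          have hyA : (y : L) ∈ (A : Submodule K L) := by
            rw [key A hdA hAab (x : L) (hXA x.2) hxp, mem_lieCentralizer_iff]
            exact hbrxy
          have : (y : L) ∈ Y ⊓ (A : Submodule K L) := ⟨y.2, hyA⟩
          rw [hYA] at this
          have hy0 : y = 0 := Subtype.ext this
          have := congrArg ψe hy0
          rw [hydef] at this
          rwa [LinearEquiv.apply_symm_apply, map_zero] at this }
  -- the linear equivalence L ≃ X × Y × p
  let T : (↥X × ↥Y × ↥p) →ₗ[K] L := X.subtype.coprod ((Y.subtype).coprod p.subtype)
  have hT : ∀ P : ↥X × ↥Y × ↥p, T P = (P.1 : L) + ((P.2.1 : L) + (P.2.2 : L)) := fun P => rfl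
  have hXYp : X ⊓ (Y ⊔ p) = ⊥ := by
    have h1 : X ⊓ (Y ⊔ p) ≤ X ⊓ p := by
      refine le_inf inf_le_left ?_
      refine le_trans (le_inf (le_trans inf_le_left hXA) (le_trans inf_le_right ?_)) hABp.le
      exact sup_le hYB hBpB
    rw [hXp] at h1
    exact le_bot_iff.mp h1
  have hTinj : Function.Injective T := by
    rw [← LinearMap.ker_eq_bot, Submodule.eq_bot_iff]
    rintro ⟨x, y, c⟩ hP
    have h0 : (x : L) + ((y : L) + (c : L)) = 0 := hP
    have hx : (x : L) ∈ X ⊓ (Y ⊔ p) := by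
      constructor
      · exact x.2
      · have : (x : L) = -((y : L) + (c : L)) := eq_neg_of_add_eq_zero_left h0
        rw [this]
        exact neg_mem (Submodule.add_mem_sup y.2 c.2)
    rw [hXYp] at hx
    have hx0 : (x : L) = 0 := hx
    have h1 : (y : L) + (c : L) = 0 := by rw [hx0, zero_add] at h0; exact h0
    have hy : (y : L) ∈ Y ⊓ p := by
      constructor
      · exact y.2
      · have : (y : L) = -(c : L) := eq_neg_of_add_eq_zero_left h1
        rw [this]
        exact neg_mem c.2
    rw [hYp] at hy
    have hy0 : (y : L) = 0 := hy
    have hc0 : (c : L) = 0 := by rw [hy0, zero_add] at h1; exact h1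
    refine Prod.ext (Subtype.ext hx0) (Prod.ext (Subtype.ext hy0) (Subtype.ext hc0))
  have hTsurj : Function.Surjective T := by
    show Function.Surjective (X.subtype.coprod ((Y.subtype).coprod p.subtype))
    rw [← LinearMap.range_eq_top, LinearMap.range_coprod, LinearMap.range_coprod,
      Submodule.range_subtype, Submodule.range_subtype, Submodule.range_subtype]
    have h1 : (X ⊔ p) ⊔ (Y ⊔ p) = ⊤ := by rw [hXsup, hYsup, hsup]
    refine top_le_iff.mp ?_
    rw [← h1]
    refine sup_le (sup_le le_sup_left ?_) le_sup_right
    exact le_trans le_sup_right le_sup_right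
  let Te : (↥X × ↥Y × ↥p) ≃ₗ[K] L := LinearEquiv.ofBijective T ⟨hTinj, hTsurj⟩
  let E : L ≃ₗ[K] (↥p × ↥p × ↥p) :=
    Te.symm.trans (LinearEquiv.prodCongr φe (LinearEquiv.prodCongr ψe (LinearEquiv.refl K ↥p)))
  -- membership in A and B as Lie subalgebras
  have hmemA : ∀ z : L, z ∈ (A : Submodule K L) → z ∈ A := fun z hz => hz
  have hmemB : ∀ z : L, z ∈ (B : Submodule K L) → z ∈ B := fun z hz => hz
  -- bracket computation
  have hbrT : ∀ P Q : ↥X × ↥Y × ↥p,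
      ⁅T P, T Q⁆ = T (0, 0, B0 P.1 Q.2.1 - B0 Q.1 P.2.1) := by
    rintro ⟨x₁, y₁, c₁⟩ ⟨x₂, y₂, c₂⟩
    rw [hT, hT, hT]
    have hxx : ⁅(x₁ : L), (x₂ : L)⁆ = 0 :=
      hAab _ (hmemA _ (hXA x₁.2)) _ (hmemA _ (hXA x₂.2))
    have hyy : ⁅(y₁ : L), (y₂ : L)⁆ = 0 :=
      hBab _ (hmemB _ (hYB y₁.2)) _ (hmemB _ (hYB y₂.2))
    have hyx : ⁅(y₁ : L), (x₂ : L)⁆ = -⁅(x₂ : L), (y₁ : L)⁆ := by rw [← lie_skew]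
    simp only [lie_add, add_lie,
      hcen _ _ c₂.2, hcen' _ c₁.2, hxx, hyy, hyx,
      ZeroMemClass.coe_zero, zero_add, add_zero]
    have : ((B0 x₁ y₂ - B0 x₂ y₁ : ↥p) : L) = ⁅(x₁ : L), (y₂ : L)⁆ - ⁅(x₂ : L), (y₁ : L)⁆ := by
      simp [hB0]
    rw [this]
    abel
  -- the Lie algebra structure and the Lie equivalence
  letI instLR : LieRing (↥p × ↥p × ↥p) := lfLieRing S
  letI instLA : LieAlgebra K (↥p × ↥p × ↥p) := lfLieAlgebra (K := K) S
  have hmul : ∀ (x : ↥X) (y : ↥Y), S.mul (φe x) (ψe y) = B0 x y := by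
    intro x y
    show B0 (φe.symm (φe x)) (ψe.symm (ψe y)) = B0 x y
    rw [LinearEquiv.symm_apply_apply, LinearEquiv.symm_apply_apply]
  have hETe : ∀ P : ↥X × ↥Y × ↥p, E (Te P) = (φe P.1, ψe P.2.1, P.2.2) := by
    rintro ⟨x, y, c⟩
    show (Te.symm.trans _) (Te (x, y, c)) = _
    rw [LinearEquiv.trans_apply, LinearEquiv.symm_apply_apply]
    rfl
  have hmaplie : ∀ u v : L, E ⁅u, v⁆ = ⁅E u, E v⁆ := by
    intro u v
    obtain ⟨P, rfl⟩ := Te.surjective u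
    obtain ⟨Q, rfl⟩ := Te.surjective v
    have hTe : ∀ R : ↥X × ↥Y × ↥p, Te R = T R := fun R => rfl
    have h1 : ⁅Te P, Te Q⁆ = Te (0, 0, B0 P.1 Q.2.1 - B0 Q.1 P.2.1) := by
      rw [hTe, hTe, hTe]
      exact hbrT P Q
    rw [h1, hETe, hETe, hETe]
    show _ = lfbr S _ _
    unfold lfbr
    simp only [map_zero]
    refine Prod.ext rfl (Prod.ext rfl ?_)
    show B0 P.1 Q.2.1 - B0 Q.1 P.2.1 = S.mul (φe P.1) (ψe Q.2.1) - S.mul (φe Q.1) (ψe P.2.1)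
    rw [hmul, hmul]
  -- transfer to a Type-0 model
  haveI : Module.Finite K ↥p := inferInstance
  haveI : Finite ↥p := Module.finite_of_finite K
  obtain ⟨m, ⟨em⟩⟩ := Finite.exists_equiv_fin ↥p
  let e0 : Fin m ≃ ↥p := em.symm
  letI iG : AddCommGroup (Fin m) := e0.addCommGroup
  letI iM : Module K (Fin m) := e0.module K
  let g : Fin m ≃ₗ[K] ↥p := e0.linearEquiv K
  let S' : SemifieldStruct K (Fin m) :=
    { mul := ((S.mul.comp g.toLinearMap).compl₂ g.toLinearMap).compr₂ g.symm.toLinearMap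
      one := g.symm S.one
      one_ne_zero := by
        intro h
        apply S.one_ne_zero
        have := congrArg g h
        rwa [LinearEquiv.apply_symm_apply, map_zero] at this
      one_mul := by
        intro a
        show g.symm (S.mul (g (g.symm S.one)) (g a)) = a
        rw [LinearEquiv.apply_symm_apply, S.one_mul, LinearEquiv.symm_apply_apply]
      mul_one := by
        intro a
        show g.symm (S.mul (g a) (g (g.symm S.one))) = a
        rw [LinearEquiv.apply_symm_apply, S.mul_one, LinearEquiv.symm_apply_apply]
      eq_zero_or_eq_zero_of_mul_eq_zero := by
        intro a b h
        have h2 : S.mul (g a) (g b) = 0 := by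
          have h' : g.symm (S.mul (g a) (g b)) = 0 := h
          have := congrArg g h'
          rwa [LinearEquiv.apply_symm_apply, map_zero] at this
        rcases S.eq_zero_or_eq_zero_of_mul_eq_zero _ _ h2 with h3 | h3
        · left
          have := congrArg g.symm h3
          rwa [LinearEquiv.symm_apply_apply, map_zero] at this
        · right
          have := congrArg g.symm h3
          rwa [LinearEquiv.symm_apply_apply, map_zero] at this }
  have hmul' : ∀ a b : Fin m, S'.mul a b = g.symm (S.mul (g a) (g b)) := fun a b => rfl
  letI instLR' : LieRing (Fin m × Fin m × Fin m) := lfLieRing S'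
  letI instLA' : LieAlgebra K (Fin m × Fin m × Fin m) := lfLieAlgebra (K := K) S'
  let G : (↥p × ↥p × ↥p) ≃ₗ[K] (Fin m × Fin m × Fin m) :=
    LinearEquiv.prodCongr g.symm (LinearEquiv.prodCongr g.symm g.symm)
  have hGmaplie : ∀ u v : ↥p × ↥p × ↥p, G ⁅u, v⁆ = ⁅G u, G v⁆ := by
    intro u v
    have hb1 : ⁅u, v⁆ = (0, 0, S.mul u.1 v.2.1 - S.mul v.1 u.2.1) := rfl
    have hb2 : ⁅G u, G v⁆ = lfbr S' (G u) (G v) := rfl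
    have hGapp : ∀ w : ↥p × ↥p × ↥p, G w = (g.symm w.1, g.symm w.2.1, g.symm w.2.2) :=
      fun _ => rfl
    rw [hb1, hb2]
    unfold lfbr
    simp only [hGapp, hmul']
    simp only [map_zero, map_sub, LinearEquiv.apply_symm_apply]
  let EL : L ≃ₗ[K] (Fin m × Fin m × Fin m) := E.trans G
  have hELlie : ∀ u v : L, EL ⁅u, v⁆ = ⁅EL u, EL v⁆ := by
    intro u v
    show G (E ⁅u, v⁆) = ⁅G (E u), G (E v)⁆
    rw [hmaplie, hGmaplie]
  refine ⟨Fin m, iG, iM, S', ?_, ⟨?_⟩⟩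
  · rw [g.finrank_eq, hdp]
  · exact
      { toLinearMap := EL.toLinearMap
        map_lie' := by intro u v; exact hELlie u v
        invFun := EL.symm
        left_inv := EL.left_inv
        right_inv := EL.right_inv }
end

section
/- Let q ≥ 3 be a prime power and let L be a finite-dimensional 3-step nilpotent stem Lie algebra over 𝔽_q of breadth type (0,2m) for some m ≥ 1. If u, v ∈ L ∖ L' satisfy [u,v] ∈ Z(L), then there exists h ∈ L' such that [u, v+h] = 0; in particular, [u,v] ∈ γ_3(L). -/
open Module

section U3

attribute [local instance 100] LieRing.ofAssociativeRing

end U3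

section Statement16Aux

open Module

variable {K : Type*} [Field K] {L : Type*} [LieRing L] [LieAlgebra K L]

/-- `ad x` as a plain linear map. -/
private def adl (x : L) : L →ₗ[K] L where
  toFun z := ⁅x, z⁆
  map_add' a b := lie_add x a b
  map_smul' t z := by simp

@[simp] private lemma adl_apply (x z : L) : (adl x : L →ₗ[K] L) z = ⁅x, z⁆ := rfl

private lemma center_lie {z : L} (h : z ∈ lieCenterSub K L) (y : L) : ⁅z, y⁆ = 0 := h y

private lemma lie_center {z : L} (h : z ∈ lieCenterSub K L) (y : L) : ⁅y, z⁆ = 0 := by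
  rw [← lie_skew, h y, neg_zero]

private lemma derivedSub_def :
    derivedSub K L
      = Submodule.span K {z : L | ∃ x : L, ∃ y ∈ (⊤ : Submodule K L), ⁅x, y⁆ = z} := rfl

private lemma gamma3_def :
    gammaSub K L 2
      = Submodule.span K {z : L | ∃ x : L, ∃ y ∈ gammaSub K L 1, ⁅x, y⁆ = z} := rfl

private lemma lie_mem_derived' (a b : L) : ⁅a, b⁆ ∈ derivedSub K L :=
  Submodule.subset_span ⟨a, b, Submodule.mem_top, rfl⟩

private lemma lie_mem_gamma2 {g : L} (hg : g ∈ derivedSub K L) (a : L) :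
    ⁅a, g⁆ ∈ gammaSub K L 2 :=
  Submodule.subset_span ⟨a, g, hg, rfl⟩

private lemma gamma4_zero (h3 : gammaSub K L 3 = ⊥) {g : L} (hg : g ∈ gammaSub K L 2) (a : L) :
    ⁅a, g⁆ = 0 := by
  have h : ⁅a, g⁆ ∈ gammaSub K L 3 := Submodule.subset_span ⟨a, g, hg, rfl⟩
  rw [h3, Submodule.mem_bot] at h
  exact h

private lemma gamma2_le_center (h3 : gammaSub K L 3 = ⊥) :
    gammaSub K L 2 ≤ lieCenterSub K L := by
  intro g hg
  intro y
  rw [← lie_skew, gamma4_zero h3 hg y, neg_zero]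

private lemma bad_lie_derived {x : L} (hxbad : ∀ w : L, ⁅x, w⁆ ∈ lieCenterSub K L)
    {g : L} (hg : g ∈ derivedSub K L) : ⁅x, g⁆ = 0 := by
  have hle : derivedSub K L ≤ LinearMap.ker (adl x : L →ₗ[K] L) := by
    rw [derivedSub_def, Submodule.span_le]
    rintro w ⟨a, b, -, rfl⟩
    simp only [SetLike.mem_coe, LinearMap.mem_ker, adl_apply]
    rw [leibniz_lie, center_lie (hxbad a) b, lie_center (hxbad b) a, add_zero]
  simpa using hle hg

variable [Module.Finite K L]

private lemma cent_eq_ker (x : L) :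
    lieCentralizer K x = LinearMap.ker (adl x : L →ₗ[K] L) := by
  ext y
  simp only [LinearMap.mem_ker, adl_apply]
  exact Iff.rfl

private lemma finrank_map_add_inf_ker (f : L →ₗ[K] L) (p : Submodule K L) :
    finrank K ↥(p.map f) + finrank K ↥(p ⊓ LinearMap.ker f) = finrank K ↥p := by
  have h := LinearMap.finrank_range_add_finrank_ker (f.domRestrict p)
  rw [LinearMap.range_domRestrict, LinearMap.ker_domRestrict] at h
  have h2 : (LinearMap.ker f).comap p.subtype = (p ⊓ LinearMap.ker f).comap p.subtype := by
    rw [Submodule.comap_inf, Submodule.comap_subtype_self, top_inf_eq]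
  rw [h2, (Submodule.comapSubtypeEquivOfLe
      (inf_le_left : p ⊓ LinearMap.ker f ≤ p)).finrank_eq] at h
  exact h

private lemma finrank_comap_eq (f : L →ₗ[K] L) (S : Submodule K L) :
    finrank K ↥(S.comap f)
      = finrank K ↥(LinearMap.ker f) + finrank K ↥(S ⊓ LinearMap.range f) := by
  have h := finrank_map_add_inf_ker f (S.comap f)
  have h1 : (S.comap f).map f = S ⊓ LinearMap.range f := by
    rw [Submodule.map_comap_eq, inf_comm]
  have h2 : S.comap f ⊓ LinearMap.ker f = LinearMap.ker f := by
    rw [inf_eq_right]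
    intro y hy
    rw [LinearMap.mem_ker] at hy
    show f y ∈ S
    rw [hy]
    exact S.zero_mem
  rw [h1, h2] at h
  omega

private lemma breadth_eqs {m : ℕ} (hbt : HasBreadthTypeZeroN K L (2 * m)) {x : L}
    (hx : x ∉ lieCenterSub K L) :
    finrank K ↥(LinearMap.ker (adl x : L →ₗ[K] L)) + 2 * m = finrank K L := by
  have h := hbt.2 x hx
  unfold lieBreadth at h
  rw [cent_eq_ker] at h
  have hle : finrank K ↥(LinearMap.ker (adl x : L →ₗ[K] L)) ≤ finrank K L :=
    Submodule.finrank_le _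
  omega

/-- The core lemma: if some bracket of `y` is non-central, then
`Z(L) ⊓ [y, L] = [y, L']`. -/
private lemma core {m : ℕ} (h3 : gammaSub K L 3 = ⊥) (hbt : HasBreadthTypeZeroN K L (2 * m))
    {y : L} (hy : ∃ z : L, ⁅y, z⁆ ∉ lieCenterSub K L) :
    lieCenterSub K L ⊓ LinearMap.range (adl y : L →ₗ[K] L)
      = (derivedSub K L).map (adl y : L →ₗ[K] L) := by
  obtain ⟨z₀, hz₀⟩ := hy
  have hyZ : y ∉ lieCenterSub K L := by
    intro h
    exact hz₀ (by rw [center_lie h z₀]; exact Submodule.zero_mem _)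
  have hAle : (derivedSub K L).map (adl y : L →ₗ[K] L)
      ≤ lieCenterSub K L ⊓ LinearMap.range (adl y : L →ₗ[K] L) := by
    rintro w ⟨g, hg, rfl⟩
    refine ⟨?_, ⟨g, rfl⟩⟩
    show ⁅y, g⁆ ∈ lieCenterSub K L
    exact gamma2_le_center h3 (lie_mem_gamma2 hg y)
  have hkey : ((lieCenterSub K L).comap (adl y : L →ₗ[K] L)).map (adl ⁅y, z₀⁆ : L →ₗ[K] L)
      ≤ (derivedSub K L).map (adl y : L →ₗ[K] L) := by
    rintro w ⟨z, hz, rfl⟩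
    have hz' : ⁅y, z⁆ ∈ lieCenterSub K L := hz
    have h1 : ⁅⁅y, z₀⁆, z⁆ = ⁅y, ⁅z₀, z⁆⁆ := by
      rw [lie_lie, lie_center hz' z₀, sub_zero]
    show ⁅⁅y, z₀⁆, z⁆ ∈ (derivedSub K L).map (adl y : L →ₗ[K] L)
    rw [h1]
    exact ⟨⁅z₀, z⁆, lie_mem_derived' z₀ z, rfl⟩
  have hyB := breadth_eqs hbt hyZ
  have hwB := breadth_eqs hbt hz₀
  have hD := finrank_comap_eq (adl y : L →ₗ[K] L) (lieCenterSub K L)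
  have hA := finrank_map_add_inf_ker (adl ⁅y, z₀⁆ : L →ₗ[K] L)
      ((lieCenterSub K L).comap (adl y : L →ₗ[K] L))
  have hb1 := Submodule.finrank_mono hkey
  have hb2 := Submodule.finrank_mono
      (inf_le_right : (lieCenterSub K L).comap (adl y : L →ₗ[K] L)
        ⊓ LinearMap.ker (adl ⁅y, z₀⁆ : L →ₗ[K] L) ≤ _)
  have hb3 := Submodule.finrank_mono hAle
  have hfin : finrank K ↥(lieCenterSub K L ⊓ LinearMap.range (adl y : L →ₗ[K] L))
      ≤ finrank K ↥((derivedSub K L).map (adl y : L →ₗ[K] L)) := by omega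
  exact (Submodule.eq_of_le_of_finrank_le hAle hfin).symm

private lemma bad_maps_into {m : ℕ} (h3 : gammaSub K L 3 = ⊥)
    (hbt : HasBreadthTypeZeroN K L (2 * m))
    {x : L} (hxbad : ∀ w : L, ⁅x, w⁆ ∈ lieCenterSub K L)
    {y : L} (hyG : ∃ z : L, ⁅y, z⁆ ∉ lieCenterSub K L)
    {z : L} (hz : ⁅y, z⁆ ∈ lieCenterSub K L) :
    ⁅x, z⁆ ∈ (derivedSub K L).map (adl y : L →ₗ[K] L) := by
  obtain ⟨z₀, hz₀⟩ := hyG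
  have hy'G : ∃ w : L, ⁅y + x, w⁆ ∉ lieCenterSub K L := by
    refine ⟨z₀, fun h => hz₀ ?_⟩
    have he : ⁅y, z₀⁆ = ⁅y + x, z₀⁆ - ⁅x, z₀⁆ := by rw [add_lie]; abel
    rw [he]
    exact Submodule.sub_mem _ h (hxbad z₀)
  have hcore := core h3 hbt (⟨z₀, hz₀⟩ : ∃ w : L, ⁅y, w⁆ ∉ lieCenterSub K L)
  have hcore' := core h3 hbt hy'G
  have hmapeq : (derivedSub K L).map (adl (y + x) : L →ₗ[K] L)
      = (derivedSub K L).map (adl y : L →ₗ[K] L) := by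
    ext w
    simp only [Submodule.mem_map, adl_apply]
    constructor
    · rintro ⟨g, hg, rfl⟩
      exact ⟨g, hg, by rw [add_lie, bad_lie_derived hxbad hg, add_zero]⟩
    · rintro ⟨g, hg, rfl⟩
      exact ⟨g, hg, by rw [add_lie, bad_lie_derived hxbad hg, add_zero]⟩
  have h1 : ⁅y + x, z⁆ ∈ (derivedSub K L).map (adl y : L →ₗ[K] L) := by
    rw [← hmapeq, ← hcore']
    refine ⟨?_, ⟨z, rfl⟩⟩
    show ⁅y + x, z⁆ ∈ lieCenterSub K L
    rw [add_lie]
    exact Submodule.add_mem _ hz (hxbad z)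
  have h2 : ⁅y, z⁆ ∈ (derivedSub K L).map (adl y : L →ₗ[K] L) := by
    rw [← hcore]
    exact ⟨hz, ⟨z, rfl⟩⟩
  have he : ⁅x, z⁆ = ⁅y + x, z⁆ - ⁅y, z⁆ := by rw [add_lie]; abel
  rw [he]
  exact Submodule.sub_mem _ h1 h2

private lemma bad_cent_le {m : ℕ} (h3 : gammaSub K L 3 = ⊥)
    (hbt : HasBreadthTypeZeroN K L (2 * m))
    {x : L} (hxZ : x ∉ lieCenterSub K L) (hxbad : ∀ w : L, ⁅x, w⁆ ∈ lieCenterSub K L)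
    {y : L} (hyG : ∃ z : L, ⁅y, z⁆ ∉ lieCenterSub K L) :
    lieCentralizer K x ≤ (lieCenterSub K L).comap (adl y : L →ₗ[K] L) := by
  have hyZ : y ∉ lieCenterSub K L := by
    obtain ⟨z₀, hz₀⟩ := hyG
    intro h
    exact hz₀ (by rw [center_lie h z₀]; exact Submodule.zero_mem _)
  have hmap : ((lieCenterSub K L).comap (adl y : L →ₗ[K] L)).map (adl x : L →ₗ[K] L)
      ≤ (derivedSub K L).map (adl y : L →ₗ[K] L) := by
    rintro w ⟨z, hz, rfl⟩
    have hz' : ⁅y, z⁆ ∈ lieCenterSub K L := hz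
    exact bad_maps_into h3 hbt hxbad hyG hz'
  have hA := finrank_map_add_inf_ker (adl x : L →ₗ[K] L)
      ((lieCenterSub K L).comap (adl y : L →ₗ[K] L))
  have hD := finrank_comap_eq (adl y : L →ₗ[K] L) (lieCenterSub K L)
  have hcore := core h3 hbt hyG
  have hcoreF : finrank K ↥(lieCenterSub K L ⊓ LinearMap.range (adl y : L →ₗ[K] L))
      = finrank K ↥((derivedSub K L).map (adl y : L →ₗ[K] L)) := by rw [hcore]
  have hxB := breadth_eqs hbt hxZ
  have hyB := breadth_eqs hbt hyZ
  have hb1 := Submodule.finrank_mono hmap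
  have hfr : finrank K ↥(LinearMap.ker (adl x : L →ₗ[K] L))
      ≤ finrank K ↥((lieCenterSub K L).comap (adl y : L →ₗ[K] L)
          ⊓ LinearMap.ker (adl x : L →ₗ[K] L)) := by omega
  have heq := Submodule.eq_of_le_of_finrank_le
      (inf_le_right : (lieCenterSub K L).comap (adl y : L →ₗ[K] L)
        ⊓ LinearMap.ker (adl x : L →ₗ[K] L) ≤ _) hfr
  rw [cent_eq_ker, ← heq]
  exact inf_le_left

private lemma bad_cent_killed {m : ℕ} (h3 : gammaSub K L 3 = ⊥)
    (hbt : HasBreadthTypeZeroN K L (2 * m))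
    {x : L} (hxZ : x ∉ lieCenterSub K L) (hxbad : ∀ w : L, ⁅x, w⁆ ∈ lieCenterSub K L)
    {w : L} (hw : w ∈ lieCentralizer K x) (y : L) : ⁅y, w⁆ ∈ lieCenterSub K L := by
  by_cases hyG : ∃ z : L, ⁅y, z⁆ ∉ lieCenterSub K L
  · exact bad_cent_le h3 hbt hxZ hxbad hyG hw
  · push_neg at hyG
    exact hyG w

private lemma bad_cent_ab {m : ℕ} (h3 : gammaSub K L 3 = ⊥)
    (hbt : HasBreadthTypeZeroN K L (2 * m))
    {x : L} (hxZ : x ∉ lieCenterSub K L) (hxbad : ∀ w : L, ⁅x, w⁆ ∈ lieCenterSub K L)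
    {w : L} (hw : w ∈ lieCentralizer K x) {g : L} (hg : g ∈ derivedSub K L) : ⁅w, g⁆ = 0 := by
  by_cases hwZ : w ∈ lieCenterSub K L
  · exact hwZ g
  · have hwbad : ∀ z : L, ⁅w, z⁆ ∈ lieCenterSub K L := by
      intro z
      have h1 := bad_cent_killed h3 hbt hxZ hxbad hw z
      have h2 : ⁅w, z⁆ = -⁅z, w⁆ := (lie_skew _ _).symm
      rw [h2]
      exact Submodule.neg_mem _ h1
    exact bad_lie_derived hwbad hg

private lemma bad_cent_eq {m : ℕ} (h3 : gammaSub K L 3 = ⊥)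
    (hbt : HasBreadthTypeZeroN K L (2 * m))
    {h0 : L} (hh0d : h0 ∈ derivedSub K L) (hh0Z : h0 ∉ lieCenterSub K L)
    {x : L} (hxZ : x ∉ lieCenterSub K L) (hxbad : ∀ w : L, ⁅x, w⁆ ∈ lieCenterSub K L) :
    lieCentralizer K x = lieCentralizer K h0 := by
  have hle : lieCentralizer K x ≤ lieCentralizer K h0 := by
    intro w hw
    show ⁅h0, w⁆ = 0
    rw [← lie_skew, bad_cent_ab h3 hbt hxZ hxbad hw hh0d, neg_zero]
  have h1 := breadth_eqs hbt hxZ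
  have h2 := breadth_eqs hbt hh0Z
  apply Submodule.eq_of_le_of_finrank_le hle
  rw [cent_eq_ker, cent_eq_ker]
  omega

private lemma exists_h0 (h3 : IsThreeStepNilpotentAlg K L) :
    ∃ h0, h0 ∈ derivedSub K L ∧ h0 ∉ lieCenterSub K L := by
  by_contra h
  push_neg at h
  apply h3.2
  refine le_bot_iff.mp ?_
  rw [gamma3_def, Submodule.span_le]
  rintro w ⟨a, g, hg, rfl⟩
  simp only [SetLike.mem_coe, Submodule.mem_bot]
  exact lie_center (h g hg) a

end Statement16Aux

/-- For a 3-step nilpotent stem Lie algebra over `𝔽_q` (`q ≥ 3`) of breadth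
type `(0, 2m)` and `u, v ∈ L ∖ L'` with `[u,v] ∈ Z(L)`, there exists `h ∈ L'` with
`[u, v + h] = 0`; in particular `[u,v] ∈ γ₃(L)`. -/
theorem stmt16 (q m : ℕ) (hq : 3 ≤ q) (hm : 1 ≤ m)
    (K : Type*) [Field K] [Fintype K] (hK : Fintype.card K = q)
    (L : Type*) [LieRing L] [LieAlgebra K L] [Module.Finite K L]
    (h3 : IsThreeStepNilpotentAlg K L) (hstem : IsStemAlg K L)
    (hbt : HasBreadthTypeZeroN K L (2 * m))
    (u v : L) (hu : u ∉ derivedSub K L) (hv : v ∉ derivedSub K L)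
    (huv : ⁅u, v⁆ ∈ lieCenterSub K L) :
    (∃ h ∈ derivedSub K L, ⁅u, v + h⁆ = 0) ∧ ⁅u, v⁆ ∈ gammaSub K L 2 := by
  classical
  by_cases hgood : ∃ z : L, ⁅u, z⁆ ∉ lieCenterSub K L
  · -- good case: ⁅u,v⁆ ∈ Z ⊓ [u,L] = [u, L']
    have hcore := core h3.1 hbt hgood
    have hc : ⁅u, v⁆ ∈ lieCenterSub K L ⊓ LinearMap.range (adl u : L →ₗ[K] L) :=
      ⟨huv, ⟨v, rfl⟩⟩
    rw [hcore] at hc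
    obtain ⟨g, hg, hgc⟩ := hc
    have hgc' : ⁅u, g⁆ = ⁅u, v⁆ := hgc
    constructor
    · refine ⟨-g, Submodule.neg_mem _ hg, ?_⟩
      rw [lie_add, lie_neg, hgc', add_neg_cancel]
    · rw [← hgc']
      exact lie_mem_gamma2 hg u
  · -- bad case: every ⁅u,z⁆ is central; derive a contradiction
    push_neg at hgood
    exfalso
    have hxZ : u ∉ lieCenterSub K L := fun h => hu (hstem h)
    obtain ⟨h0, hh0d, hh0Z⟩ := exists_h0 h3
    obtain ⟨f₀, hf₀⟩ : ∃ f₀ : L, ⁅u, f₀⁆ ≠ 0 := by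
      by_contra h
      push_neg at h
      exact hxZ h
    have hf₀M : f₀ ∉ lieCentralizer K u := hf₀
    have hf₀G : ∃ z : L, ⁅f₀, z⁆ ∉ lieCenterSub K L := by
      by_contra h
      push_neg at h
      have hf₀Z : f₀ ∉ lieCenterSub K L := by
        intro hZ
        exact hf₀ (lie_center hZ u)
      have e1 := bad_cent_eq h3.1 hbt hh0d hh0Z hf₀Z h
      have e2 := bad_cent_eq h3.1 hbt hh0d hh0Z hxZ hgood
      apply hf₀M
      rw [e2, ← e1]
      exact lie_self f₀
    have huD : u ∈ (lieCenterSub K L).comap (adl f₀ : L →ₗ[K] L) :=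
      bad_cent_le h3.1 hbt hxZ hgood hf₀G (lie_self u)
    have hcoref := core h3.1 hbt hf₀G
    have h2 : ⁅f₀, u⁆ ∈ (derivedSub K L).map (adl f₀ : L →ₗ[K] L) := by
      rw [← hcoref]
      exact ⟨huD, ⟨u, rfl⟩⟩
    obtain ⟨g, hg, hgeq⟩ := h2
    have hgeq' : ⁅f₀, g⁆ = ⁅f₀, u⁆ := hgeq
    have hdiff : ⁅f₀, u - g⁆ = 0 := by
      rw [lie_sub, hgeq', sub_self]
    by_cases hZ : u - g ∈ lieCenterSub K L
    · apply hu
      have hu' : u = g + (u - g) := by abel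
      rw [hu']
      exact Submodule.add_mem _ hg (hstem hZ)
    · have hugM : u - g ∈ lieCentralizer K u := by
        show ⁅u, u - g⁆ = 0
        rw [lie_sub, lie_self, bad_lie_derived hgood hg, sub_self]
      have hugbad : ∀ w : L, ⁅u - g, w⁆ ∈ lieCenterSub K L := by
        intro w
        have h1 := bad_cent_killed h3.1 hbt hxZ hgood hugM w
        have h2' : ⁅u - g, w⁆ = -⁅w, u - g⁆ := (lie_skew _ _).symm
        rw [h2']
        exact Submodule.neg_mem _ h1
      have e1 := bad_cent_eq h3.1 hbt hh0d hh0Z hZ hugbad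
      have e2 := bad_cent_eq h3.1 hbt hh0d hh0Z hxZ hgood
      apply hf₀M
      rw [e2, ← e1]
      show ⁅u - g, f₀⁆ = 0
      rw [← lie_skew, hdiff, neg_zero]
end
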